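/- The entropic optimal transport loss is convex in the mixture weights: for each fixed θ ∈ (ℝ^d)^K, the map a ↦ 𝓛(θ,a) is convex on the open probability simplex {a ∈ (0,1)^K : Σ_k a_k = 1}. -/
import Mathlib


open MeasureTheory

/-- Gaussian density on `ℝ^d` with mean `μ` and covariance `σ² I_d`. -/
noncomputable def gaussDen (d : ℕ) (σ : ℝ) (μ y : EuclideanSpace ℝ (Fin d)) : ℝ :=
  (2 * Real.pi * σ ^ 2) ^ (-(d : ℝ) / 2) * Real.exp (-‖y - μ‖ ^ 2 / (2 * σ ^ 2))

/-- A responsibility function: a measurable map into `[0,1]^K` whose coordinates sum to one. -/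
def IsResp (K d : ℕ) (w : EuclideanSpace ℝ (Fin d) → Fin K → ℝ) : Prop :=
  (∀ k, Measurable fun y => w y k) ∧ (∀ y k, w y k ∈ Set.Icc (0 : ℝ) 1) ∧
    (∀ y, ∑ k, w y k = 1)

/-- The free energy `E_Q(w, θ)`. -/
noncomputable def freeEnergy (K d : ℕ) (σ : ℝ) (α : Fin K → ℝ)
    (Q : Measure (EuclideanSpace ℝ (Fin d)))
    (w : EuclideanSpace ℝ (Fin d) → Fin K → ℝ)
    (θ : Fin K → EuclideanSpace ℝ (Fin d)) : ℝ :=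
  ∫ y, (∑ k, w y k * (Real.log (w y k) - Real.log (α k * gaussDen d σ (θ k) y))) ∂Q

/-- The negative population log-likelihood `ℓ(θ)`. -/
noncomputable def negLogLik (K d : ℕ) (σ : ℝ) (α : Fin K → ℝ)
    (Q : Measure (EuclideanSpace ℝ (Fin d)))
    (θ : Fin K → EuclideanSpace ℝ (Fin d)) : ℝ :=
  -∫ y, Real.log (∑ k, α k * gaussDen d σ (θ k) y) ∂Q

/-- The entropic optimal transport loss `𝓛(θ)`: infimum of the free energy over
responsibility functions satisfying the marginal constraints. -/
noncomputable def entLoss (K d : ℕ) (σ : ℝ) (α : Fin K → ℝ)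
    (Q : Measure (EuclideanSpace ℝ (Fin d)))
    (θ : Fin K → EuclideanSpace ℝ (Fin d)) : ℝ :=
  sInf {r : ℝ | ∃ w, IsResp K d w ∧ (∀ k, ∫ y, w y k ∂Q = α k) ∧
    freeEnergy K d σ α Q w θ = r}

section Aux

lemma sub_le_mul_log' {x y : ℝ} (hx : 0 ≤ x) (hy : 0 < y) :
    x - y ≤ x * Real.log (x / y) := by
  rcases hx.eq_or_lt with h | h
  · simp [← h]; linarith
  · have h1 : Real.log (y / x) ≤ y / x - 1 := Real.log_le_sub_one_of_pos (div_pos hy h)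
    have h2 : Real.log (x / y) = -Real.log (y / x) := by
      rw [← Real.log_inv]; congr 1; field_simp
    have h3 : x * Real.log (y / x) ≤ x * (y / x - 1) :=
      mul_le_mul_of_nonneg_left h1 h.le
    have h4 : x * (y / x - 1) = y - x := by field_simp
    rw [h2]; nlinarith

lemma neg_one_le_mul_log {x : ℝ} (hx : 0 ≤ x) : -1 ≤ x * Real.log x := by
  have := sub_le_mul_log' hx one_pos
  simp at this; linarith

lemma abs_mul_log_le_one {x : ℝ} (hx : 0 ≤ x) (hx1 : x ≤ 1) : |x * Real.log x| ≤ 1 := by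
  have h1 := neg_one_le_mul_log hx
  have h2 : x * Real.log x ≤ 0 :=
    mul_nonpos_of_nonneg_of_nonpos hx (Real.log_nonpos hx hx1)
  rw [abs_le]; constructor <;> linarith

lemma logSum2 {x₁ x₂ y₁ y₂ : ℝ} (hx₁ : 0 ≤ x₁) (hx₂ : 0 ≤ x₂) (hy₁ : 0 < y₁) (hy₂ : 0 < y₂) :
    (x₁ + x₂) * Real.log ((x₁ + x₂) / (y₁ + y₂)) ≤
      x₁ * Real.log (x₁ / y₁) + x₂ * Real.log (x₂ / y₂) := by
  rcases (add_nonneg hx₁ hx₂).eq_or_lt with h | hX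
  · have h1 : x₁ = 0 := by linarith
    have h2 : x₂ = 0 := by linarith
    simp [h1, h2]
  · have hY : 0 < y₁ + y₂ := by linarith
    set R := (x₁ + x₂) / (y₁ + y₂) with hR
    have hRpos : 0 < R := div_pos hX hY
    have key : ∀ x y : ℝ, 0 ≤ x → 0 < y →
        x * Real.log R + (x - y * R) ≤ x * Real.log (x / y) := by
      intro x y hx hy
      rcases hx.eq_or_lt with h | h
      · subst h; simp; positivity
      · have h1 : x - y * R ≤ x * Real.log (x / (y * R)) :=
          sub_le_mul_log' hx (by positivity)
        have h2 : Real.log (x / (y * R)) = Real.log (x / y) - Real.log R := by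
          rw [show x / (y * R) = (x / y) / R by field_simp,
            Real.log_div (by positivity) hRpos.ne']
        rw [h2] at h1; nlinarith
    have k1 := key x₁ y₁ hx₁ hy₁
    have k2 := key x₂ y₂ hx₂ hy₂
    have hYR : (y₁ + y₂) * R = x₁ + x₂ := by rw [hR]; field_simp
    nlinarith

lemma mul_log_sub_eq {x y : ℝ} (hx : 0 ≤ x) (hy : 0 < y) :
    x * (Real.log x - Real.log y) = x * Real.log (x / y) := by
  rcases hx.eq_or_lt with h | h
  · subst h; simp
  · rw [Real.log_div h.ne' hy.ne']

lemma keyk {t s u v a b q : ℝ} (ht : 0 < t) (hs : 0 < s) (hu : 0 ≤ u) (hv : 0 ≤ v)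
    (ha : 0 < a) (hb : 0 < b) (hq : 0 < q) :
    (t * u + s * v) * (Real.log (t * u + s * v) - Real.log ((t * a + s * b) * q)) ≤
      t * (u * (Real.log u - Real.log (a * q))) + s * (v * (Real.log v - Real.log (b * q))) := by
  have haq : 0 < a * q := by positivity
  have hbq : 0 < b * q := by positivity
  have habq : 0 < (t * a + s * b) * q := by positivity
  rw [mul_log_sub_eq (by positivity) habq, mul_log_sub_eq hu haq, mul_log_sub_eq hv hbq]
  have h1 : t * (u * Real.log (u / (a * q))) = (t * u) * Real.log ((t * u) / (t * (a * q))) := by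
    rw [mul_div_mul_left _ _ ht.ne']; ring
  have h2 : s * (v * Real.log (v / (b * q))) = (s * v) * Real.log ((s * v) / (s * (b * q))) := by
    rw [mul_div_mul_left _ _ hs.ne']; ring
  rw [h1, h2]
  have := logSum2 (mul_nonneg ht.le hu) (mul_nonneg hs.le hv)
    (show 0 < t * (a * q) by positivity) (show 0 < s * (b * q) by positivity)
  have he : (t * a + s * b) * q = t * (a * q) + s * (b * q) := by ring
  rw [he]
  exact this

lemma gaussDen_pos {d : ℕ} {σ : ℝ} (hσ : 0 < σ) (μ y : EuclideanSpace ℝ (Fin d)) :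
    0 < gaussDen d σ μ y := by
  unfold gaussDen
  have h2 : 0 < 2 * Real.pi * σ ^ 2 := by positivity
  positivity

lemma measurable_gaussDen {d : ℕ} {σ : ℝ} (μ : EuclideanSpace ℝ (Fin d)) :
    Measurable (gaussDen d σ μ) := by
  unfold gaussDen; fun_prop

lemma log_gaussDen {d : ℕ} {σ : ℝ} (hσ : 0 < σ) (μ y : EuclideanSpace ℝ (Fin d)) :
    Real.log (gaussDen d σ μ y) =
      Real.log ((2 * Real.pi * σ ^ 2) ^ (-(d : ℝ) / 2)) - ‖y - μ‖ ^ 2 / (2 * σ ^ 2) := by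
  unfold gaussDen
  have h2 : (0:ℝ) < (2 * Real.pi * σ ^ 2) ^ (-(d : ℝ) / 2) := by
    have : 0 < 2 * Real.pi * σ ^ 2 := by positivity
    positivity
  rw [Real.log_mul h2.ne' (Real.exp_ne_zero _), Real.log_exp]
  ring

lemma term_expand {d : ℕ} {σ : ℝ} (hσ : 0 < σ) {a w : ℝ} (ha : 0 < a)
    (μ y : EuclideanSpace ℝ (Fin d)) :
    w * (Real.log w - Real.log (a * gaussDen d σ μ y)) =
      w * Real.log w - w * Real.log a
        - w * Real.log ((2 * Real.pi * σ ^ 2) ^ (-(d : ℝ) / 2))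
        + w * (‖y - μ‖ ^ 2 / (2 * σ ^ 2)) := by
  rw [Real.log_mul ha.ne' (gaussDen_pos hσ μ y).ne', log_gaussDen hσ]
  ring

variable {K d : ℕ} {σ : ℝ} {Q : Measure (EuclideanSpace ℝ (Fin d))}
  {θ : Fin K → EuclideanSpace ℝ (Fin d)}
  {w : EuclideanSpace ℝ (Fin d) → Fin K → ℝ} {a : Fin K → ℝ}

lemma integrable_w [IsProbabilityMeasure Q] (hmeas : ∀ k, Measurable fun y => w y k)
    (hicc : ∀ y k, w y k ∈ Set.Icc (0 : ℝ) 1) (k : Fin K) :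
    Integrable (fun y => w y k) Q := by
  refine (integrable_const (1 : ℝ)).mono' ((hmeas k).aestronglyMeasurable) ?_
  filter_upwards with y
  rw [Real.norm_eq_abs, abs_le]
  exact ⟨by linarith [(hicc y k).1], (hicc y k).2⟩

lemma integrable_integrand [IsProbabilityMeasure Q] (hσ : 0 < σ)
    (hQ : Integrable (fun y => ‖y‖ ^ 2) Q)
    (hmeas : ∀ k, Measurable fun y => w y k)
    (hicc : ∀ y k, w y k ∈ Set.Icc (0 : ℝ) 1)
    (ha : ∀ k, 0 < a k) :
    Integrable
      (fun y => ∑ k, w y k * (Real.log (w y k) - Real.log (a k * gaussDen d σ (θ k) y))) Q := by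
  set CL := Real.log ((2 * Real.pi * σ ^ 2) ^ (-(d : ℝ) / 2)) with hCL
  refine Integrable.mono'
    (g := fun y => (∑ k, (1 + |Real.log (a k)| + |CL| + ‖θ k‖ ^ 2 / σ ^ 2))
      + (K : ℝ) * (‖y‖ ^ 2 / σ ^ 2)) ?_ ?_ ?_
  · exact (integrable_const _).add ((hQ.div_const _).const_mul _)
  · refine (Finset.measurable_sum _ fun k _ => ?_).aestronglyMeasurable
    exact (hmeas k).mul (((hmeas k).log).sub
      ((measurable_const.mul (measurable_gaussDen (θ k))).log))
  · filter_upwards with y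
    rw [Real.norm_eq_abs]
    calc |∑ k, w y k * (Real.log (w y k) - Real.log (a k * gaussDen d σ (θ k) y))|
        ≤ ∑ k, |w y k * (Real.log (w y k) - Real.log (a k * gaussDen d σ (θ k) y))| :=
          Finset.abs_sum_le_sum_abs _ _
      _ ≤ ∑ k, (1 + |Real.log (a k)| + |CL| + ‖θ k‖ ^ 2 / σ ^ 2 + ‖y‖ ^ 2 / σ ^ 2) := by
          refine Finset.sum_le_sum fun k _ => ?_
          rw [term_expand hσ (ha k) (θ k) y, ← hCL]
          have hw0 := (hicc y k).1
          have hw1 := (hicc y k).2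
          have habsw : |w y k| ≤ 1 := by rw [abs_le]; exact ⟨by linarith, hw1⟩
          have hA := abs_mul_log_le_one hw0 hw1
          have hB : |w y k * Real.log (a k)| ≤ |Real.log (a k)| := by
            rw [abs_mul]; exact mul_le_of_le_one_left (abs_nonneg _) habsw
          have hC : |w y k * CL| ≤ |CL| := by
            rw [abs_mul]; exact mul_le_of_le_one_left (abs_nonneg _) habsw
          have hD0 : 0 ≤ w y k * (‖y - θ k‖ ^ 2 / (2 * σ ^ 2)) := by positivity
          have hnorm : ‖y - θ k‖ ^ 2 ≤ 2 * ‖y‖ ^ 2 + 2 * ‖θ k‖ ^ 2 := by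
            have h1 := norm_sub_le y (θ k)
            nlinarith [sq_nonneg (‖y‖ - ‖θ k‖), mul_self_le_mul_self (norm_nonneg (y - θ k)) h1,
              norm_nonneg (y - θ k), norm_nonneg y, norm_nonneg (θ k)]
          have hD : w y k * (‖y - θ k‖ ^ 2 / (2 * σ ^ 2)) ≤ ‖θ k‖ ^ 2 / σ ^ 2 + ‖y‖ ^ 2 / σ ^ 2 := by
            have h2 : w y k * (‖y - θ k‖ ^ 2 / (2 * σ ^ 2)) ≤ ‖y - θ k‖ ^ 2 / (2 * σ ^ 2) := by
              have : 0 ≤ ‖y - θ k‖ ^ 2 / (2 * σ ^ 2) := by positivity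
              nlinarith
            have h3 : ‖y - θ k‖ ^ 2 / (2 * σ ^ 2) ≤ (2 * ‖y‖ ^ 2 + 2 * ‖θ k‖ ^ 2) / (2 * σ ^ 2) := by
              gcongr
            have h4 : (2 * ‖y‖ ^ 2 + 2 * ‖θ k‖ ^ 2) / (2 * σ ^ 2) = ‖θ k‖ ^ 2 / σ ^ 2 + ‖y‖ ^ 2 / σ ^ 2 := by
              field_simp; ring
            linarith
          obtain ⟨hA1, hA2⟩ := abs_le.1 hA
          obtain ⟨hB1, hB2⟩ := abs_le.1 hB
          obtain ⟨hC1, hC2⟩ := abs_le.1 hC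
          rw [abs_le]
          constructor <;> linarith
      _ = (∑ k, (1 + |Real.log (a k)| + |CL| + ‖θ k‖ ^ 2 / σ ^ 2)) + (K : ℝ) * (‖y‖ ^ 2 / σ ^ 2) := by
          rw [Finset.sum_add_distrib, Finset.sum_const, Finset.card_univ, Fintype.card_fin,
            nsmul_eq_mul]


lemma freeEnergy_lower [IsProbabilityMeasure Q] (hσ : 0 < σ)
    (hQ : Integrable (fun y => ‖y‖ ^ 2) Q)
    (hw : IsResp K d w) (ha : ∀ k, a k ∈ Set.Ioo (0 : ℝ) 1) :
    -(K : ℝ) - Real.log ((2 * Real.pi * σ ^ 2) ^ (-(d : ℝ) / 2)) ≤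
      freeEnergy K d σ a Q w θ := by
  obtain ⟨hmeas, hicc, hsum⟩ := hw
  set CL := Real.log ((2 * Real.pi * σ ^ 2) ^ (-(d : ℝ) / 2)) with hCL
  have hint := integrable_integrand (θ := θ) hσ hQ hmeas hicc (fun k => (ha k).1)
  have hpt : ∀ y, -(K : ℝ) - CL ≤
      ∑ k, w y k * (Real.log (w y k) - Real.log (a k * gaussDen d σ (θ k) y)) := by
    intro y
    have step : ∀ k ∈ Finset.univ, (-1 : ℝ) - w y k * CL ≤
        w y k * (Real.log (w y k) - Real.log (a k * gaussDen d σ (θ k) y)) := by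
      intro k _
      rw [term_expand hσ (ha k).1 (θ k) y, ← hCL]
      have h1 := neg_one_le_mul_log (hicc y k).1
      have h2 : w y k * Real.log (a k) ≤ 0 :=
        mul_nonpos_of_nonneg_of_nonpos (hicc y k).1 (Real.log_nonpos (ha k).1.le (ha k).2.le)
      have h3 : 0 ≤ w y k * (‖y - θ k‖ ^ 2 / (2 * σ ^ 2)) := by
        have := (hicc y k).1; positivity
      linarith
    have hsle := Finset.sum_le_sum step
    have heq : ∑ _k : Fin K, ((-1 : ℝ) - w y _k * CL) = -(K : ℝ) - CL := by
      rw [Finset.sum_sub_distrib, Finset.sum_const, Finset.card_univ, Fintype.card_fin,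
        ← Finset.sum_mul, hsum y, one_mul, nsmul_eq_mul, mul_neg_one]
    rw [heq] at hsle
    exact hsle
  calc -(K : ℝ) - CL = ∫ _y, (-(K : ℝ) - CL) ∂Q := by simp
    _ ≤ ∫ y, ∑ k, w y k * (Real.log (w y k) - Real.log (a k * gaussDen d σ (θ k) y)) ∂Q :=
        integral_mono (integrable_const _) hint hpt

end Aux

/-- for each fixed `θ`, the entropic OT loss `a ↦ 𝓛(θ, a)` is convex
on the open probability simplex. -/
theorem entLoss_convexOn_weights
    (K d : ℕ) (hK : 1 ≤ K) (hd : 1 ≤ d) (σ : ℝ) (hσ : 0 < σ)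
    (Q : Measure (EuclideanSpace ℝ (Fin d))) [IsProbabilityMeasure Q]
    (hQ : Integrable (fun y => ‖y‖ ^ 2) Q)
    (θ : Fin K → EuclideanSpace ℝ (Fin d)) :
    ConvexOn ℝ {a : Fin K → ℝ | (∀ k, a k ∈ Set.Ioo (0 : ℝ) 1) ∧ ∑ k, a k = 1}
      (fun a => entLoss K d σ a Q θ) := by
  have hsetconv : Convex ℝ {a : Fin K → ℝ | (∀ k, a k ∈ Set.Ioo (0 : ℝ) 1) ∧ ∑ k, a k = 1} := by
    intro a ha b hb t s ht hs hts
    constructor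
    · intro k
      simp only [Pi.add_apply, Pi.smul_apply, smul_eq_mul]
      have h1 := ha.1 k
      have h2 := hb.1 k
      constructor
      · rcases ht.eq_or_lt with h | h
        · have hs1 : s = 1 := by linarith
          rw [← h, hs1]; simpa using h2.1
        · nlinarith [mul_pos h h1.1, mul_nonneg hs h2.1.le]
      · rcases ht.eq_or_lt with h | h
        · have hs1 : s = 1 := by linarith
          rw [← h, hs1]; simpa using h2.2
        · have e1 : t * a k < t * 1 := by nlinarith [h1.2]
          have e2 : s * b k ≤ s * 1 := mul_le_mul_of_nonneg_left h2.2.le hs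
          nlinarith
    · simp only [Pi.add_apply, Pi.smul_apply, smul_eq_mul]
      rw [Finset.sum_add_distrib, ← Finset.mul_sum, ← Finset.mul_sum, ha.2, hb.2,
        mul_one, mul_one]
      exact hts
  refine ⟨hsetconv, ?_⟩
  intro a ha b hb t s ht hs hts
  simp only [smul_eq_mul]
  rcases ht.eq_or_lt with h | ht'
  · have hs1 : s = 1 := by linarith
    subst hs1
    rw [← h]
    simp
  rcases hs.eq_or_lt with h | hs'
  · have ht1 : t = 1 := by linarith
    subst ht1
    rw [← h]
    simp
  have hmemc := hsetconv ha hb ht hs hts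
  set SS : (Fin K → ℝ) → Set ℝ := fun α =>
    {r : ℝ | ∃ w, IsResp K d w ∧ (∀ k, ∫ y, w y k ∂Q = α k) ∧
      freeEnergy K d σ α Q w θ = r} with hSSdef
  show sInf (SS (t • a + s • b)) ≤ t * sInf (SS a) + s * sInf (SS b)
  have hbdd : ∀ α : Fin K → ℝ, (∀ k, α k ∈ Set.Ioo (0 : ℝ) 1) → BddBelow (SS α) := by
    intro α h1
    refine ⟨-(K : ℝ) - Real.log ((2 * Real.pi * σ ^ 2) ^ (-(d : ℝ) / 2)), fun r hr => ?_⟩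
    obtain ⟨w, hw, hmarg, rfl⟩ := hr
    exact freeEnergy_lower hσ hQ hw h1
  have hne : ∀ α : Fin K → ℝ, (∀ k, α k ∈ Set.Ioo (0 : ℝ) 1) → (∑ k, α k = 1) →
      (SS α).Nonempty := by
    intro α h1 h2
    exact ⟨freeEnergy K d σ α Q (fun _ => α) θ, fun _ => α,
      ⟨fun k => measurable_const, fun y k => ⟨(h1 k).1.le, (h1 k).2.le⟩, fun y => h2⟩,
      fun k => by simp, rfl⟩
  have hmix : ∀ r₁ ∈ SS a, ∀ r₂ ∈ SS b, sInf (SS (t • a + s • b)) ≤ t * r₁ + s * r₂ := by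
    intro r₁ hr₁ r₂ hr₂
    obtain ⟨w₁, ⟨hm₁, hi₁, hs₁⟩, hmarg₁, rfl⟩ := hr₁
    obtain ⟨w₂, ⟨hm₂, hi₂, hs₂⟩, hmarg₂, rfl⟩ := hr₂
    set wt : EuclideanSpace ℝ (Fin d) → Fin K → ℝ :=
      fun y k => t * w₁ y k + s * w₂ y k with hwt
    have hmt : ∀ k, Measurable fun y => wt y k := fun k =>
      (measurable_const.mul (hm₁ k)).add (measurable_const.mul (hm₂ k))
    have hit : ∀ y k, wt y k ∈ Set.Icc (0 : ℝ) 1 := by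
      intro y k
      have a1 := hi₁ y k
      have a2 := hi₂ y k
      constructor
      · have b1 := mul_nonneg ht a1.1
        have b2 := mul_nonneg hs a2.1
        simp only [hwt]; linarith
      · have b1 : t * w₁ y k ≤ t * 1 := mul_le_mul_of_nonneg_left a1.2 ht
        have b2 : s * w₂ y k ≤ s * 1 := mul_le_mul_of_nonneg_left a2.2 hs
        simp only [hwt]; nlinarith
    have hst : ∀ y, ∑ k, wt y k = 1 := by
      intro y
      simp only [hwt]
      rw [Finset.sum_add_distrib, ← Finset.mul_sum, ← Finset.mul_sum, hs₁ y, hs₂ y,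
        mul_one, mul_one]
      exact hts
    have hmargt : ∀ k, ∫ y, wt y k ∂Q = (t • a + s • b) k := by
      intro k
      simp only [hwt, Pi.add_apply, Pi.smul_apply, smul_eq_mul]
      rw [integral_add ((integrable_w hm₁ hi₁ k).const_mul t)
          ((integrable_w hm₂ hi₂ k).const_mul s),
        integral_const_mul, integral_const_mul, hmarg₁ k, hmarg₂ k]
    have hposc : ∀ k, 0 < (t • a + s • b) k := fun k => (hmemc.1 k).1
    have hintt := integrable_integrand (w := wt) (a := t • a + s • b) (θ := θ)
      hσ hQ hmt hit hposc
    have hint₁ := integrable_integrand (w := w₁) (a := a) (θ := θ)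
      hσ hQ hm₁ hi₁ (fun k => (ha.1 k).1)
    have hint₂ := integrable_integrand (w := w₂) (a := b) (θ := θ)
      hσ hQ hm₂ hi₂ (fun k => (hb.1 k).1)
    have hpt : ∀ y,
        (∑ k, wt y k * (Real.log (wt y k) - Real.log ((t • a + s • b) k * gaussDen d σ (θ k) y)))
        ≤ t * (∑ k, w₁ y k * (Real.log (w₁ y k) - Real.log (a k * gaussDen d σ (θ k) y)))
          + s * (∑ k, w₂ y k * (Real.log (w₂ y k) - Real.log (b k * gaussDen d σ (θ k) y))) := by
      intro y
      rw [Finset.mul_sum, Finset.mul_sum, ← Finset.sum_add_distrib]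
      refine Finset.sum_le_sum fun k _ => ?_
      have hkey := keyk ht' hs' (hi₁ y k).1 (hi₂ y k).1 (ha.1 k).1 (hb.1 k).1
        (gaussDen_pos hσ (θ k) y)
      simpa [hwt, Pi.add_apply, Pi.smul_apply, smul_eq_mul] using hkey
    have hFE : freeEnergy K d σ (t • a + s • b) Q wt θ ≤
        t * freeEnergy K d σ a Q w₁ θ + s * freeEnergy K d σ b Q w₂ θ := by
      have step1 : freeEnergy K d σ (t • a + s • b) Q wt θ ≤
          ∫ y, (t * (∑ k, w₁ y k * (Real.log (w₁ y k) - Real.log (a k * gaussDen d σ (θ k) y)))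
            + s * (∑ k, w₂ y k * (Real.log (w₂ y k) - Real.log (b k * gaussDen d σ (θ k) y)))) ∂Q :=
        integral_mono hintt ((hint₁.const_mul t).add (hint₂.const_mul s)) hpt
      have step2 :
          (∫ y, (t * (∑ k, w₁ y k * (Real.log (w₁ y k) - Real.log (a k * gaussDen d σ (θ k) y)))
            + s * (∑ k, w₂ y k * (Real.log (w₂ y k) - Real.log (b k * gaussDen d σ (θ k) y)))) ∂Q)
          = t * freeEnergy K d σ a Q w₁ θ + s * freeEnergy K d σ b Q w₂ θ := by
        rw [integral_add (hint₁.const_mul t) (hint₂.const_mul s),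
          integral_const_mul, integral_const_mul]
        rfl
      linarith [step1, step2.le, step2.ge]
    calc sInf (SS (t • a + s • b)) ≤ freeEnergy K d σ (t • a + s • b) Q wt θ :=
        csInf_le (hbdd _ hmemc.1) ⟨wt, ⟨hmt, hit, hst⟩, hmargt, rfl⟩
      _ ≤ t * freeEnergy K d σ a Q w₁ θ + s * freeEnergy K d σ b Q w₂ θ := hFE
  have hIa := hne a ha.1 ha.2
  have hIb := hne b hb.1 hb.2
  have step2 : ∀ r₂ ∈ SS b, sInf (SS (t • a + s • b)) ≤ t * sInf (SS a) + s * r₂ := by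
    intro r₂ hr₂
    have h1 : (sInf (SS (t • a + s • b)) - s * r₂) / t ≤ sInf (SS a) := by
      refine le_csInf hIa fun r₁ hr₁ => ?_
      rw [div_le_iff₀ ht']
      linarith [hmix r₁ hr₁ r₂ hr₂]
    rw [div_le_iff₀ ht'] at h1
    linarith
  have h2 : (sInf (SS (t • a + s • b)) - t * sInf (SS a)) / s ≤ sInf (SS b) := by
    refine le_csInf hIb fun r₂ hr₂ => ?_
    rw [div_le_iff₀ hs']
    linarith [step2 r₂ hr₂]
  rw [div_le_iff₀ hs'] at h2
  linarith
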